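/- Let N ≥ 2 and T ≥ 1, set P = N+T and L = NP, let I ⊆ Z_P with |I| = T, write Z_P \ I = {l_0 < … < l_{N-1}}, let π_0,…,π_{K-1} be the rows of a K×N circular Florentine rectangle over Z_N with g_{i,t} = π_i^{−1}(t), and let H = (h_{c,s}) be an N×N complex matrix with |h_{c,s}| = 1 for all c, s. For 0 ≤ i < K and 0 ≤ c < N define û^{i,c}_{Pr+l_t} = √(P/N)·ω_N^{r·g_{i,t}}·h_{c,t} and û^{i,c}_{Pr+s} = 0 for s ∈ I, and let U^{i,c} be the inverse unitary DFT of Û^{i,c}. Then for all 0 ≤ i ≠ i′ < K, all 0 ≤ c_0, c_1 < N, and all 0 ≤ τ < L, the inter-set cross-correlation satisfies |θ_{U^{i,c_0}, U^{i′,c_1}}(τ)| = P = L/√(L − N(P−N)), meeting with equality the inter-set cross-correlation lower bound L/√(L−n) for SCS sets with n = N(P−N) forbidden carriers. -/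

import Mathlib

/-- Periodic cross-correlation of two length-`L` complex sequences. -/
noncomputable def pcc (L : ℕ) (c d : ℕ → ℂ) (τ : ℕ) : ℂ :=
  ∑ t ∈ Finset.range L, c t * (starRingEnd ℂ) (d ((t + τ) % L))

/-- Inverse unitary DFT of a length-`L` complex sequence. -/
noncomputable def iudft (L : ℕ) (chat : ℕ → ℂ) (t : ℕ) : ℂ :=
  ((Real.sqrt L : ℝ) : ℂ)⁻¹ * ∑ n ∈ Finset.range L,
    chat n * Complex.exp (2 * (Real.pi : ℂ) * Complex.I * (n : ℂ) * (t : ℂ) / (L : ℂ))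

/-- The frequency-domain sequence of Construction 4: writing `n = P·r + s`
(`r = n/P`, `s = n%P`), `û_{Pr+l_t} = √(P/N)·ω_N^{r·g(t)}·h(t)` for the increasing
enumeration `l` of the admissible carriers, and `û_{Pr+s} = 0` for forbidden `s ∈ I`
(no `t` matches, so the sum below is empty). -/
noncomputable def uhatH (N P : ℕ) (l g : Fin N → ℕ) (h : Fin N → ℂ) (n : ℕ) : ℂ :=
  ∑ t : Fin N,
    if l t = n % P then
      (Real.sqrt ((P : ℝ) / (N : ℝ)) : ℂ) *
        Complex.exp (2 * (Real.pi : ℂ) * Complex.I *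
          (((n / P) * g t : ℕ) : ℂ) / (N : ℂ)) * h t
    else 0

/-- An `K × N` circular Florentine rectangle over `Z_N`. -/
def IsCFR (N K : ℕ) (σ : Fin K → Equiv.Perm (ZMod N)) : Prop :=
  ∀ m : ZMod N, m ≠ 0 → ∀ i j : Fin K, ∀ x y : ZMod N,
    σ i x = σ j y → σ i (x + m) = σ j (y + m) → i = j ∧ x = y

noncomputable def eC (x : ℂ) : ℂ := Complex.exp (2 * (Real.pi : ℂ) * Complex.I * x)

lemma eC_add (x y : ℂ) : eC (x + y) = eC x * eC y := by
  simp [eC, mul_add, Complex.exp_add]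

lemma eC_int (k : ℤ) : eC k = 1 := by
  simp [eC]
  rw [show 2 * (Real.pi : ℂ) * Complex.I * k = k * (2 * Real.pi * Complex.I) by ring]
  exact Complex.exp_int_mul_two_pi_mul_I k

lemma eC_nat_pow (x : ℂ) (t : ℕ) : eC (t * x) = (eC x) ^ t := by
  rw [eC, eC, ← Complex.exp_nat_mul]; ring_nf

lemma eC_conj (x : ℝ) : (starRingEnd ℂ) (eC x) = eC (-x) := by
  rw [eC, eC, ← Complex.exp_conj]
  congr 1
  have : (starRingEnd ℂ) (2 * (Real.pi : ℂ) * Complex.I * x)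
      = 2 * (Real.pi : ℂ) * (-Complex.I) * x := by
    rw [map_mul, map_mul, map_mul, Complex.conj_I, Complex.conj_ofReal,
      Complex.conj_ofReal]
    rw [map_ofNat]
  rw [this]; ring

lemma eC_eq_one_iff (x : ℂ) : eC x = 1 ↔ ∃ n : ℤ, x = n := by
  rw [eC, Complex.exp_eq_one_iff]
  constructor
  · rintro ⟨n, hn⟩
    refine ⟨n, ?_⟩
    have h2 : (2 * (Real.pi : ℂ) * Complex.I) ≠ 0 :=
      mul_ne_zero (mul_ne_zero two_ne_zero
        (Complex.ofReal_ne_zero.mpr Real.pi_ne_zero)) Complex.I_ne_zero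
    exact mul_left_cancel₀ h2 (by rw [hn]; ring)
  · rintro ⟨n, hn⟩
    exact ⟨n, by rw [hn]; ring⟩

lemma geom_sum_eC (M : ℕ) (hM : 0 < M) (k : ℤ) :
    ∑ t ∈ Finset.range M, eC ((k : ℂ) * t / M) = if (M : ℤ) ∣ k then (M : ℂ) else 0 := by
  have hMC : (M : ℂ) ≠ 0 := Nat.cast_ne_zero.mpr hM.ne'
  by_cases hdvd : (M : ℤ) ∣ k
  · simp only [hdvd, if_true]
    obtain ⟨q, rfl⟩ := hdvd
    have : ∀ t ∈ Finset.range M, eC ((((M : ℤ) * q : ℤ) : ℂ) * t / M) = 1 := by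
      intro t _
      rw [show (((M : ℤ) * q : ℤ) : ℂ) * t / M = ((q * t : ℤ) : ℂ) by push_cast; field_simp]
      exact eC_int _
    rw [Finset.sum_congr rfl this, Finset.sum_const, Finset.card_range,
      nsmul_eq_mul, mul_one]
  · simp only [hdvd, if_false]
    have hz : eC ((k : ℂ) / M) ≠ 1 := by
      intro h
      rw [eC_eq_one_iff] at h
      obtain ⟨n, hn⟩ := h
      apply hdvd
      refine ⟨n, ?_⟩
      have : (k : ℂ) = M * n := by field_simp at hn; rw [hn]
      exact_mod_cast this
    have : ∀ t ∈ Finset.range M, eC ((k : ℂ) * t / M) = (eC ((k : ℂ) / M)) ^ t := by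
      intro t _
      rw [← eC_nat_pow]; ring_nf
    rw [Finset.sum_congr rfl this, geom_sum_eq hz]
    have : eC ((k : ℂ) / M) ^ M = 1 := by
      rw [← eC_nat_pow]
      rw [show (M : ℂ) * ((k:ℂ)/M) = ((k : ℤ) : ℂ) by field_simp]
      exact eC_int k
    rw [this]
    simp

lemma ortho (L : ℕ) (hL : 0 < L) (f : ℕ → ℕ → ℂ) :
    ∑ t ∈ Finset.range L, ∑ n ∈ Finset.range L, ∑ m ∈ Finset.range L,
      f n m * eC ((((n : ℤ) - (m : ℤ) : ℤ) : ℂ) * t / L)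
    = (L : ℂ) * ∑ n ∈ Finset.range L, f n n := by
  rw [Finset.sum_comm]
  have h1 : ∀ n ∈ Finset.range L,
      ∑ t ∈ Finset.range L, ∑ m ∈ Finset.range L,
        f n m * eC ((((n : ℤ) - (m : ℤ) : ℤ) : ℂ) * t / L)
      = ∑ m ∈ Finset.range L, ∑ t ∈ Finset.range L,
        f n m * eC ((((n : ℤ) - (m : ℤ) : ℤ) : ℂ) * t / L) := fun n _ => Finset.sum_comm
  rw [Finset.sum_congr rfl h1, Finset.mul_sum]
  refine Finset.sum_congr rfl (fun n hn => ?_)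
  rw [Finset.sum_eq_single_of_mem n hn]
  · rw [← Finset.mul_sum, geom_sum_eC L hL, if_pos (by simp)]
    ring
  · intro m hm hmn
    rw [← Finset.mul_sum, geom_sum_eC L hL, if_neg, mul_zero]
    intro hdvd
    rw [Finset.mem_range] at hn hm
    have hb : ((n : ℤ) - (m : ℤ)).natAbs < (L : ℤ).natAbs := by omega
    have := Int.eq_zero_of_dvd_of_natAbs_lt_natAbs hdvd hb
    omega

lemma pcc_dft (L : ℕ) (hL : 0 < L) (a b : ℕ → ℂ) (τ : ℕ) :
    pcc L (iudft L a) (iudft L b) τ =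
      ∑ n ∈ Finset.range L, a n * (starRingEnd ℂ) (b n) * eC (-((n * τ : ℕ) : ℂ) / L) := by
  have hLC : (L : ℂ) ≠ 0 := Nat.cast_ne_zero.mpr hL.ne'
  have hsq : ((Real.sqrt L : ℝ) : ℂ)⁻¹ * ((Real.sqrt L : ℝ) : ℂ)⁻¹ * (L : ℂ) = 1 := by
    rw [← mul_inv]
    rw [show ((Real.sqrt L : ℝ) : ℂ) * ((Real.sqrt L : ℝ) : ℂ)
        = ((Real.sqrt L * Real.sqrt L : ℝ) : ℂ) by push_cast; ring]
    rw [Real.mul_self_sqrt (Nat.cast_nonneg L)]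
    exact inv_mul_cancel₀ hLC
  have key : ∀ t ∈ Finset.range L,
      (iudft L a t) * (starRingEnd ℂ) (iudft L b ((t + τ) % L))
      = ((Real.sqrt L : ℝ) : ℂ)⁻¹ * ((Real.sqrt L : ℝ) : ℂ)⁻¹ *
        ∑ n ∈ Finset.range L, ∑ m ∈ Finset.range L,
          (a n * (starRingEnd ℂ) (b m) * eC (-((m * τ : ℕ) : ℂ) / L)) *
            eC ((((n : ℤ) - (m : ℤ) : ℤ) : ℂ) * t / L) := by
    intro t _
    rw [iudft, iudft, map_mul, map_inv₀, Complex.conj_ofReal, map_sum]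
    rw [show (((Real.sqrt L : ℝ) : ℂ)⁻¹ * ∑ n ∈ Finset.range L,
        a n * Complex.exp (2 * (Real.pi : ℂ) * Complex.I * (n : ℂ) * (t : ℂ) / (L : ℂ))) *
        (((Real.sqrt L : ℝ) : ℂ)⁻¹ * ∑ m ∈ Finset.range L,
          (starRingEnd ℂ) (b m * Complex.exp (2 * (Real.pi : ℂ) * Complex.I * (m : ℂ) *
            (((t + τ) % L : ℕ) : ℂ) / (L : ℂ))))
        = ((Real.sqrt L : ℝ) : ℂ)⁻¹ * ((Real.sqrt L : ℝ) : ℂ)⁻¹ *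
          ((∑ n ∈ Finset.range L,
            a n * Complex.exp (2 * (Real.pi : ℂ) * Complex.I * (n : ℂ) * (t : ℂ) / (L : ℂ))) *
          ∑ m ∈ Finset.range L,
            (starRingEnd ℂ) (b m * Complex.exp (2 * (Real.pi : ℂ) * Complex.I * (m : ℂ) *
              (((t + τ) % L : ℕ) : ℂ) / (L : ℂ)))) by ring]
    congr 1
    rw [Finset.sum_mul_sum]
    refine Finset.sum_congr rfl (fun n _ => Finset.sum_congr rfl (fun m _ => ?_))
    rw [map_mul]
    have e1 : Complex.exp (2 * (Real.pi : ℂ) * Complex.I * (m : ℂ) *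
        (((t + τ) % L : ℕ) : ℂ) / (L : ℂ)) = eC (((m * ((t + τ) % L) : ℕ) / L : ℝ)) := by
      rw [eC]; congr 1; push_cast; field_simp
    rw [e1, eC_conj]
    have e2 : eC (-(((m * ((t + τ) % L) : ℕ) / L : ℝ))) = eC (-((m : ℂ) * ((t + τ : ℕ)) / L)) := by
      have h1 : ((-(((m * ((t + τ) % L) : ℕ) / L : ℝ))) : ℂ)
          = -((m : ℂ) * (((t + τ) % L : ℕ) : ℂ) / L) := by push_cast; ring
      rw [h1]
      obtain ⟨A, B, hAB, hBdef⟩ : ∃ A B : ℕ, t + τ = L * A + B ∧ (t + τ) % L = B :=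
        ⟨(t + τ) / L, (t + τ) % L, (Nat.div_add_mod _ _).symm, rfl⟩
      rw [hBdef, hAB]
      have harg : -((m : ℂ) * ((L * A + B : ℕ) : ℂ) / L)
          = -((m : ℂ) * ((B : ℕ) : ℂ) / L) + (((-((m * A : ℕ) : ℤ)) : ℤ) : ℂ) := by
        push_cast; field_simp; ring
      rw [harg, eC_add, eC_int, mul_one]
    rw [e2]
    have e3 : Complex.exp (2 * (Real.pi : ℂ) * Complex.I * (n : ℂ) * (t : ℂ) / (L : ℂ))
        = eC ((n : ℂ) * t / L) := by
      rw [eC]; congr 1; ring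
    rw [e3]
    have e4 : eC ((n : ℂ) * t / L) * eC (-((m : ℂ) * ((t + τ : ℕ)) / L))
        = eC (-((m * τ : ℕ) : ℂ) / L) * eC ((((n : ℤ) - (m : ℤ) : ℤ) : ℂ) * t / L) := by
      rw [← eC_add, ← eC_add]
      congr 1
      push_cast
      field_simp
      ring
    rw [show a n * eC ((n : ℂ) * t / L) * ((starRingEnd ℂ) (b m) * eC (-((m : ℂ) * ((t + τ : ℕ)) / L)))
        = a n * (starRingEnd ℂ) (b m) * (eC ((n : ℂ) * t / L) * eC (-((m : ℂ) * ((t + τ : ℕ)) / L))) by ring,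
      e4]
    ring
  rw [pcc, Finset.sum_congr rfl key, ← Finset.mul_sum,
    ortho L hL (fun n m => a n * (starRingEnd ℂ) (b m) * eC (-((m * τ : ℕ) : ℂ) / L))]
  rw [← mul_assoc, hsq, one_mul]

lemma CFR_unique (N K : ℕ) (hN : 2 ≤ N) (σ : Fin K → Equiv.Perm (ZMod N))
    (hCFR : IsCFR N K σ) (i i' : Fin K) (hii : i ≠ i') (τ : ℕ) :
    ∃! t : Fin N, (N : ℤ) ∣ (((((σ i).symm ((t : ℕ) : ZMod N)).val : ℤ)
      - ((((σ i').symm ((t : ℕ) : ZMod N)).val : ℤ)) - (τ : ℤ))) := by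
  haveI : NeZero N := ⟨by omega⟩
  have hinj : Function.Injective
      (fun u : ZMod N => (σ i).symm u - (σ i').symm u) := by
    intro u v huv
    by_contra hne
    set x := (σ i).symm u with hx
    set y := (σ i').symm u with hy
    set x' := (σ i).symm v with hx'
    set y' := (σ i').symm v with hy'
    have hxy : x - y = x' - y' := huv
    have hm : x' - x ≠ 0 := by
      intro h0
      apply hne
      have hxx : x' = x := sub_eq_zero.mp h0
      calc u = σ i x := ((σ i).apply_symm_apply u).symm
        _ = σ i x' := by rw [hxx]
        _ = v := (σ i).apply_symm_apply v
    have hy'' : y' = y + (x' - x) := by linear_combination hxy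
    have h1 : σ i x = σ i' y := by
      rw [hx, hy, (σ i).apply_symm_apply, (σ i').apply_symm_apply]
    have h2 : σ i (x + (x' - x)) = σ i' (y + (x' - x)) := by
      rw [show x + (x' - x) = x' by ring, ← hy'', hx', hy',
        (σ i).apply_symm_apply, (σ i').apply_symm_apply]
    exact hii (hCFR (x' - x) hm i i' x y h1 h2).1
  have hsurj : Function.Surjective
      (fun u : ZMod N => (σ i).symm u - (σ i').symm u) :=
    Finite.surjective_of_injective hinj
  obtain ⟨u, hu⟩ := hsurj ((τ : ℕ) : ZMod N)
  have hu' : (σ i).symm u - (σ i').symm u = ((τ : ℕ) : ZMod N) := hu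
  have hval : ∀ t : Fin N, ((N : ℤ) ∣ (((((σ i).symm ((t : ℕ) : ZMod N)).val : ℤ)
      - ((((σ i').symm ((t : ℕ) : ZMod N)).val : ℤ)) - (τ : ℤ)))) ↔
      (σ i).symm ((t : ℕ) : ZMod N) - (σ i').symm ((t : ℕ) : ZMod N)
        = ((τ : ℕ) : ZMod N) := by
    intro t
    rw [← ZMod.intCast_zmod_eq_zero_iff_dvd]
    push_cast [ZMod.natCast_val, ZMod.cast_id]
    constructor
    · intro h
      linear_combination h
    · intro h
      linear_combination h
  have hcast : (((⟨u.val, u.val_lt⟩ : Fin N) : ℕ) : ZMod N) = u := by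
    simp [ZMod.natCast_val, ZMod.cast_id]
  refine ⟨⟨u.val, u.val_lt⟩, (hval _).mpr ?_, fun t ht => ?_⟩
  · rw [hcast, hu']
  · have h3 := (hval t).mp ht
    have h4 : (fun u : ZMod N => (σ i).symm u - (σ i').symm u) ((t : ℕ) : ZMod N)
        = (fun u : ZMod N => (σ i).symm u - (σ i').symm u) u := by
      simpa using h3.trans hu'.symm
    have h5 := hinj h4
    apply Fin.ext
    have h6 : (t : ℕ) = u.val := by
      rw [← h5]
      exact (ZMod.val_cast_of_lt t.isLt).symm
    simpa using h6

lemma sum_range_mul_comm (N P : ℕ) (hP : 0 < P) (f : ℕ → ℂ) :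
    ∑ n ∈ Finset.range (N * P), f n
      = ∑ r ∈ Finset.range N, ∑ s ∈ Finset.range P, f (P * r + s) := by
  rw [← Finset.sum_product']
  refine Finset.sum_nbij' (fun n => (n / P, n % P)) (fun p => P * p.1 + p.2)
    ?_ ?_ ?_ ?_ ?_
  · intro n hn
    rw [Finset.mem_range] at hn
    rw [Finset.mem_product, Finset.mem_range, Finset.mem_range]
    exact ⟨Nat.div_lt_of_lt_mul (by rw [Nat.mul_comm] at hn; exact hn), Nat.mod_lt _ hP⟩
  · intro p hp
    rw [Finset.mem_product, Finset.mem_range, Finset.mem_range] at hp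
    rw [Finset.mem_range]
    calc P * p.1 + p.2 < P * p.1 + P := by omega
      _ = P * (p.1 + 1) := by ring
      _ ≤ P * N := Nat.mul_le_mul_left P hp.1
      _ = N * P := Nat.mul_comm P N
  · intro n _
    exact Nat.div_add_mod n P
  · intro p hp
    rw [Finset.mem_product, Finset.mem_range, Finset.mem_range] at hp
    ext
    · simp only
      rw [Nat.mul_add_div hP, Nat.div_eq_of_lt hp.2, Nat.add_zero]
    · simp only
      rw [Nat.mul_add_mod, Nat.mod_eq_of_lt hp.2]
  · intro n _
    rw [Nat.div_add_mod n P]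

lemma uhatH_at (N P : ℕ) (hP : 0 < P) (l : Fin N → ℕ) (hlinj : Function.Injective l)
    (hlP : ∀ t, l t < P) (g : Fin N → ℕ) (h : Fin N → ℂ) (r : ℕ) (t0 : Fin N) :
    uhatH N P l g h (P * r + l t0) =
      ((Real.sqrt ((P : ℝ) / (N : ℝ)) : ℝ) : ℂ) *
        eC ((((r * g t0 : ℕ) : ℝ) / (N : ℝ) : ℝ)) * h t0 := by
  have hmod : (P * r + l t0) % P = l t0 := by
    rw [Nat.mul_add_mod, Nat.mod_eq_of_lt (hlP t0)]
  have hdiv : (P * r + l t0) / P = r := by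
    rw [Nat.mul_add_div hP, Nat.div_eq_of_lt (hlP t0), Nat.add_zero]
  rw [uhatH]
  rw [Finset.sum_eq_single_of_mem t0 (Finset.mem_univ t0)]
  · rw [hmod, if_pos rfl, hdiv]
    congr 2
    rw [eC]
    congr 1
    push_cast
    ring
  · intro t _ htne
    rw [hmod, if_neg (fun he => htne (hlinj he))]

lemma uhatH_zero (N P : ℕ) (hP : 0 < P) (l : Fin N → ℕ) (hlP : ∀ t, l t < P)
    (g : Fin N → ℕ) (h : Fin N → ℂ) (r s : ℕ) (hs : s < P) (hns : ∀ t, l t ≠ s) :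
    uhatH N P l g h (P * r + s) = 0 := by
  rw [uhatH]
  refine Finset.sum_eq_zero (fun t _ => ?_)
  rw [if_neg]
  rw [Nat.mul_add_mod, Nat.mod_eq_of_lt hs]
  exact hns t

lemma eC_norm_real (x : ℝ) : ‖eC ((x : ℝ) : ℂ)‖ = 1 := by
  rw [eC, show 2 * (Real.pi : ℂ) * Complex.I * (x : ℂ)
    = ((2 * Real.pi * x : ℝ) : ℂ) * Complex.I by push_cast; ring]
  exact Complex.norm_exp_ofReal_mul_I _

/-- let `N ≥ 2`, `T ≥ 1`, `P = N+T`, `L = NP`, `I ⊆ Z_P` with `|I| = T`,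
increasing enumeration `l` of `Z_P \ I`, `σ 0, …, σ (K−1)` the rows of a `K × N` CFR
over `Z_N` (`g_{i,t} = σ_i⁻¹(t)`), and `H` an `N×N` unimodular complex matrix. Then
for all `i ≠ i'`, all `c₀, c₁` and all `0 ≤ τ < L`, the inter-set cross-correlation
satisfies `|θ_{U^{i,c₀},U^{i',c₁}}(τ)| = P = L/√(L − N(P−N))`, meeting the inter-set
cross-correlation lower bound `L/√(L−n)` with `n = N(P−N)` forbidden carriers. -/
theorem stmt19 (N T K : ℕ) (hN : 2 ≤ N) (hT : 1 ≤ T)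
    (I : Finset ℕ) (hIsub : I ⊆ Finset.range (N + T)) (hIcard : I.card = T)
    (l : Fin N → ℕ) (hlmono : StrictMono l) (hlP : ∀ t, l t < N + T)
    (hlI : ∀ s < N + T, (s ∉ I ↔ ∃ t, l t = s))
    (σ : Fin K → Equiv.Perm (ZMod N)) (hCFR : IsCFR N K σ)
    (H : Fin N → Fin N → ℂ) (hH : ∀ c s : Fin N, ‖H c s‖ = 1)
    (U : Fin K → Fin N → ℕ → ℂ)
    (hU : ∀ (i : Fin K) (c : Fin N) (t : ℕ), U i c t =
      iudft (N * (N + T))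
        (uhatH N (N + T) l (fun t => ((σ i).symm ((t : ℕ) : ZMod N)).val) (H c)) t)
    (i i' : Fin K) (hii : i ≠ i') (c0 c1 : Fin N) (τ : ℕ) (hτ : τ < N * (N + T)) :
    ‖pcc (N * (N + T)) (U i c0) (U i' c1) τ‖ = ((N + T : ℕ) : ℝ) ∧
    ((N + T : ℕ) : ℝ) = ((N * (N + T) : ℕ) : ℝ) /
      Real.sqrt (((N * (N + T) : ℕ) : ℝ) - (N : ℝ) * (((N + T : ℕ) : ℝ) - (N : ℝ))) := by
  have hN0 : 0 < N := by omega
  have hP : 0 < N + T := by omega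
  have hL : 0 < N * (N + T) := Nat.mul_pos hN0 hP
  have hNC : (N : ℂ) ≠ 0 := Nat.cast_ne_zero.mpr hN0.ne'
  have hPC : (N : ℂ) + (T : ℂ) ≠ 0 := by
    rw [show (N : ℂ) + (T : ℂ) = ((N + T : ℕ) : ℂ) by push_cast; ring]
    exact Nat.cast_ne_zero.mpr hP.ne'
  have hlinj : Function.Injective l := hlmono.injective
  constructor
  · obtain ⟨t0, ht0, huniq⟩ := CFR_unique N K hN σ hCFR i i' hii τ
    have S1 : pcc (N * (N + T)) (U i c0) (U i' c1) τ
        = ∑ n ∈ Finset.range (N * (N + T)), uhatH N (N + T) l (fun t => ((σ i).symm ((t : ℕ) : ZMod N)).val) (H c0) (n) * (starRingEnd ℂ) (uhatH N (N + T) l (fun t => ((σ i').symm ((t : ℕ) : ZMod N)).val) (H c1) (n)) * eC (-(((n) * τ : ℕ) : ℂ) / ((N * (N + T) : ℕ) : ℂ)) := by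
      have hpcc : pcc (N * (N + T)) (U i c0) (U i' c1) τ
          = pcc (N * (N + T)) (iudft (N * (N + T)) (uhatH N (N + T) l (fun t => ((σ i).symm ((t : ℕ) : ZMod N)).val) (H c0)))
              (iudft (N * (N + T)) (uhatH N (N + T) l (fun t => ((σ i').symm ((t : ℕ) : ZMod N)).val) (H c1))) τ := by
        unfold pcc
        exact Finset.sum_congr rfl (fun t _ => by
          rw [hU i c0 t, hU i' c1 ((t + τ) % (N * (N + T)))])
      rw [hpcc]
      exact pcc_dft (N * (N + T)) hL _ _ τ
    have S2 : (∑ n ∈ Finset.range (N * (N + T)), uhatH N (N + T) l (fun t => ((σ i).symm ((t : ℕ) : ZMod N)).val) (H c0) (n) * (starRingEnd ℂ) (uhatH N (N + T) l (fun t => ((σ i').symm ((t : ℕ) : ZMod N)).val) (H c1) (n)) * eC (-(((n) * τ : ℕ) : ℂ) / ((N * (N + T) : ℕ) : ℂ)))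
        = ∑ r ∈ Finset.range N, ∑ s ∈ Finset.range (N + T), uhatH N (N + T) l (fun t => ((σ i).symm ((t : ℕ) : ZMod N)).val) (H c0) ((N + T) * r + s) * (starRingEnd ℂ) (uhatH N (N + T) l (fun t => ((σ i').symm ((t : ℕ) : ZMod N)).val) (H c1) ((N + T) * r + s)) * eC (-((((N + T) * r + s) * τ : ℕ) : ℂ) / ((N * (N + T) : ℕ) : ℂ)) :=
      sum_range_mul_comm N (N + T) hP _
    have S3 : ∀ r ∈ Finset.range N,
        (∑ s ∈ Finset.range (N + T), uhatH N (N + T) l (fun t => ((σ i).symm ((t : ℕ) : ZMod N)).val) (H c0) ((N + T) * r + s) * (starRingEnd ℂ) (uhatH N (N + T) l (fun t => ((σ i').symm ((t : ℕ) : ZMod N)).val) (H c1) ((N + T) * r + s)) * eC (-((((N + T) * r + s) * τ : ℕ) : ℂ) / ((N * (N + T) : ℕ) : ℂ)))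
        = ∑ t : Fin N, ((((N + T : ℕ) : ℝ) / (N : ℝ) : ℝ) : ℂ) * H c0 t * (starRingEnd ℂ) (H c1 t) * eC (-((l t * τ : ℕ) : ℂ) / ((N * (N + T) : ℕ) : ℂ)) * eC ((((((((σ i).symm ((t : ℕ) : ZMod N)).val : ℤ) - ((((σ i').symm ((t : ℕ) : ZMod N)).val : ℤ)) - (τ : ℤ))) : ℤ) : ℂ) * (r : ℂ) / ((N : ℕ) : ℂ)) := by
      intro r _
      have himg : Finset.image l Finset.univ ⊆ Finset.range (N + T) := by
        intro s hs
        rw [Finset.mem_image] at hs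
        obtain ⟨t, _, rfl⟩ := hs
        exact Finset.mem_range.mpr (hlP t)
      have hzero : ∀ s ∈ Finset.range (N + T), s ∉ Finset.image l Finset.univ →
          uhatH N (N + T) l (fun t => ((σ i).symm ((t : ℕ) : ZMod N)).val) (H c0) ((N + T) * r + s) * (starRingEnd ℂ) (uhatH N (N + T) l (fun t => ((σ i').symm ((t : ℕ) : ZMod N)).val) (H c1) ((N + T) * r + s)) * eC (-((((N + T) * r + s) * τ : ℕ) : ℂ) / ((N * (N + T) : ℕ) : ℂ)) = 0 := by
        intro s hs hnot
        have hns : ∀ t, l t ≠ s := fun t he =>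
          hnot (Finset.mem_image.mpr ⟨t, Finset.mem_univ t, he⟩)
        rw [uhatH_zero N (N + T) hP l hlP _ _ r s (Finset.mem_range.mp hs) hns,
          zero_mul, zero_mul]
      rw [← Finset.sum_subset himg hzero,
        Finset.sum_image (fun t _ t' _ h => hlinj h)]
      refine Finset.sum_congr rfl (fun t _ => ?_)
      rw [uhatH_at N (N + T) hP l hlinj hlP _ (H c0) r t,
        uhatH_at N (N + T) hP l hlinj hlP _ (H c1) r t]
      rw [map_mul, map_mul, Complex.conj_ofReal, eC_conj]
      beta_reduce
      have hq : ((Real.sqrt (((N + T : ℕ) : ℝ) / (N : ℝ)) : ℝ) : ℂ) * ((Real.sqrt (((N + T : ℕ) : ℝ) / (N : ℝ)) : ℝ) : ℂ) = ((((N + T : ℕ) : ℝ) / (N : ℝ) : ℝ) : ℂ) := by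
        rw [← Complex.ofReal_mul, Real.mul_self_sqrt (by positivity)]
      have hE : eC ((((r * ((σ i).symm ((t : ℕ) : ZMod N)).val : ℕ) : ℝ) / (N : ℝ) : ℝ))
          * eC (-((((r * ((σ i').symm ((t : ℕ) : ZMod N)).val : ℕ) : ℝ) / (N : ℝ) : ℝ) : ℂ))
          * eC (-(((((N + T) * r + l t) * τ : ℕ)) : ℂ) / ((N * (N + T) : ℕ) : ℂ))
          = eC (-((l t * τ : ℕ) : ℂ) / ((N * (N + T) : ℕ) : ℂ))
            * eC ((((((((σ i).symm ((t : ℕ) : ZMod N)).val : ℤ) - ((((σ i').symm ((t : ℕ) : ZMod N)).val : ℤ)) - (τ : ℤ))) : ℤ) : ℂ) * (r : ℂ) / ((N : ℕ) : ℂ)) := by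
        rw [← eC_add, ← eC_add, ← eC_add]
        congr 1
        push_cast
        field_simp
        ring
      linear_combination (eC ((((r * ((σ i).symm ((t : ℕ) : ZMod N)).val : ℕ) : ℝ) / (N : ℝ) : ℝ))
          * eC (-((((r * ((σ i').symm ((t : ℕ) : ZMod N)).val : ℕ) : ℝ) / (N : ℝ) : ℝ) : ℂ))
          * eC (-(((((N + T) * r + l t) * τ : ℕ)) : ℂ) / ((N * (N + T) : ℕ) : ℂ))
          * H c0 t * (starRingEnd ℂ) (H c1 t)) * hq
        + (((((N + T : ℕ) : ℝ) / (N : ℝ) : ℝ) : ℂ) * H c0 t * (starRingEnd ℂ) (H c1 t)) * hE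
    have S5 : ∀ t : Fin N,
        (∑ r ∈ Finset.range N, ((((N + T : ℕ) : ℝ) / (N : ℝ) : ℝ) : ℂ) * H c0 t * (starRingEnd ℂ) (H c1 t) * eC (-((l t * τ : ℕ) : ℂ) / ((N * (N + T) : ℕ) : ℂ)) * eC ((((((((σ i).symm ((t : ℕ) : ZMod N)).val : ℤ) - ((((σ i').symm ((t : ℕ) : ZMod N)).val : ℤ)) - (τ : ℤ))) : ℤ) : ℂ) * (r : ℂ) / ((N : ℕ) : ℂ)))
        = ((((N + T : ℕ) : ℝ) / (N : ℝ) : ℝ) : ℂ) * H c0 t * (starRingEnd ℂ) (H c1 t) * eC (-((l t * τ : ℕ) : ℂ) / ((N * (N + T) : ℕ) : ℂ)) * (if (N : ℤ) ∣ (((((σ i).symm ((t : ℕ) : ZMod N)).val : ℤ) - ((((σ i').symm ((t : ℕ) : ZMod N)).val : ℤ)) - (τ : ℤ))) then ((N : ℕ) : ℂ) else 0) := by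
      intro t
      rw [← Finset.mul_sum, geom_sum_eC N hN0 ((((((σ i).symm ((t : ℕ) : ZMod N)).val : ℤ) - ((((σ i').symm ((t : ℕ) : ZMod N)).val : ℤ)) - (τ : ℤ))))]
    have S6 : (∑ t : Fin N, ((((N + T : ℕ) : ℝ) / (N : ℝ) : ℝ) : ℂ) * H c0 t * (starRingEnd ℂ) (H c1 t) * eC (-((l t * τ : ℕ) : ℂ) / ((N * (N + T) : ℕ) : ℂ)) * (if (N : ℤ) ∣ (((((σ i).symm ((t : ℕ) : ZMod N)).val : ℤ) - ((((σ i').symm ((t : ℕ) : ZMod N)).val : ℤ)) - (τ : ℤ))) then ((N : ℕ) : ℂ) else 0))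
        = ((((N + T : ℕ) : ℝ) / (N : ℝ) : ℝ) : ℂ) * H c0 t0 * (starRingEnd ℂ) (H c1 t0) * eC (-((l t0 * τ : ℕ) : ℂ) / ((N * (N + T) : ℕ) : ℂ)) * ((N : ℕ) : ℂ) := by
      rw [Finset.sum_eq_single_of_mem t0 (Finset.mem_univ t0)]
      · rw [if_pos ht0]
      · intro t _ htne
        rw [if_neg (fun hd => htne (huniq t hd)), mul_zero]
    rw [S1, S2, Finset.sum_congr rfl S3, Finset.sum_comm,
      Finset.sum_congr rfl (fun t _ => S5 t), S6]
    rw [norm_mul, norm_mul, norm_mul, norm_mul]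
    rw [hH c0 t0, RCLike.norm_conj, hH c1 t0]
    rw [show -((l t0 * τ : ℕ) : ℂ) / ((N * (N + T) : ℕ) : ℂ)
        = (((-(((l t0 * τ : ℕ) : ℝ) / ((N * (N + T) : ℕ) : ℝ))) : ℝ) : ℂ) by
      push_cast; ring]
    rw [eC_norm_real]
    rw [Complex.norm_real, Real.norm_eq_abs,
      abs_of_nonneg (by positivity : (0 : ℝ) ≤ ((N + T : ℕ) : ℝ) / (N : ℝ))]
    rw [show ‖(((N : ℕ) : ℂ))‖ = ((N : ℕ) : ℝ) by
      rw [Complex.norm_natCast]]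
    have hNR : (N : ℝ) ≠ 0 := Nat.cast_ne_zero.mpr hN0.ne'
    field_simp
  · have h2 : ((N * (N + T) : ℕ) : ℝ) - (N : ℝ) * (((N + T : ℕ) : ℝ) - (N : ℝ))
        = (N : ℝ) * (N : ℝ) := by push_cast; ring
    rw [h2, Real.sqrt_mul_self (Nat.cast_nonneg N), Nat.cast_mul]
    have hNR : (N : ℝ) ≠ 0 := by
      have : 0 < N := by omega
      exact Nat.cast_ne_zero.mpr this.ne'
    field_simp
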